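/- Damages can be strictly optimal (Example 1): For each k ∈ (0,1) and ε ∈ (0, min(1/2, 1−k)), let f_{k,ε} be the density on [0,1]² given by f_{k,ε}(a,b) = ε·2/(1/2 − ε)² if b − a ≥ 1/2 + ε, f_{k,ε}(a,b) = k·2/(ε − ε²) if 1/2 ≤ b − a < 1/2 + ε, and f_{k,ε}(a,b) = (8/7)·(1 − k − ε) if b − a < 1/2 (this is a probability density), and set supplies μ_A = 1 − k − ε and μ_B = k + ε. Then for every k ∈ (0,1) there exists ε̄ > 0 such that for every ε ∈ (0, ε̄) there is a feasible mechanism whose total welfare strictly exceeds the supremum of total welfare over all feasible mechanisms with x ≡ 1. -/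

import Mathlib

/- Damages can be strictly optimal (Example 1). -/

open Set MeasureTheory

noncomputable section
open scoped Classical

inductive Good where
  | none : Good
  | A : Good
  | B : Good
deriving DecidableEq

structure Mech where
  c : ℝ × ℝ → ℝ
  x : ℝ × ℝ → ℝ
  y : ℝ × ℝ → Good

def square : Set (ℝ × ℝ) := Icc (0:ℝ) 1 ×ˢ Icc (0:ℝ) 1

def Mech.util (M : Mech) (t r : ℝ × ℝ) : ℝ :=
  match M.y r with
  | Good.A => M.x r * t.1 - M.c r
  | Good.B => M.x r * t.2 - M.c r
  | Good.none => 0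

def Mech.U (M : Mech) (t : ℝ × ℝ) : ℝ := M.util t t

def Fmeas (f : ℝ × ℝ → ℝ) (S : Set (ℝ × ℝ)) : ℝ := ∫ p in S ∩ square, f p

def Mech.Valid (M : Mech) : Prop :=
  (∀ r, 0 ≤ M.c r) ∧ (∀ r, M.x r ∈ Icc (0:ℝ) 1)

def Mech.IC (M : Mech) : Prop :=
  ∀ t ∈ square, ∀ r ∈ square, M.util t r ≤ M.U t

def Mech.IR (M : Mech) : Prop :=
  ∀ t ∈ square, 0 ≤ M.U t

def Mech.Feasible (M : Mech) (f : ℝ × ℝ → ℝ) (muA muB : ℝ) : Prop :=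
  M.Valid ∧ M.IC ∧ M.IR ∧
  Fmeas f {p | M.y p = Good.A} ≤ muA ∧ Fmeas f {p | M.y p = Good.B} ≤ muB

def Mech.welfare (M : Mech) (f : ℝ × ℝ → ℝ) : ℝ :=
  ∫ p in square, M.U p * f p

/-- The density of Example 1. -/
def fke (k ε : ℝ) (p : ℝ × ℝ) : ℝ :=
  if 1/2 + ε ≤ p.2 - p.1 then ε * 2 / (1/2 - ε)^2
  else if 1/2 ≤ p.2 - p.1 then k * 2 / (ε - ε^2)
  else 8/7 * (1 - k - ε)


namespace DamagesEx

noncomputable def wk (k : ℝ) : ℝ := Real.sqrt k / 4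
noncomputable def Tk (k ε : ℝ) : ℝ := (1 - k - ε) * (ε - ε^2) / 56
noncomputable def dlt (k ε : ℝ) : ℝ :=
  ((1/2 - wk k) - Real.sqrt ((1/2 - wk k)^2 - 4 * Tk k ε)) / 2
noncomputable def ell (k : ℝ) (b : ℝ) : ℝ := b/2 - 1/4 + wk k / 2
noncomputable def cc1 (ε : ℝ) : ℝ := ε * 2 / (1/2 - ε)^2
noncomputable def cc2 (k ε : ℝ) : ℝ := k * 2 / (ε - ε^2)
noncomputable def cc3 (k ε : ℝ) : ℝ := 8/7 * (1 - k - ε)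

structure OK (k ε : ℝ) : Prop where
  hk0 : 0 < k
  hk1 : k < 1
  he0 : 0 < ε
  hek : ε < k
  hes : ε < (1 - k) * Real.sqrt k / 1000

namespace OK

variable {k ε : ℝ}

lemma hsq0 (h : OK k ε) : 0 < Real.sqrt k := Real.sqrt_pos.2 h.hk0
lemma hsq1 (h : OK k ε) : Real.sqrt k < 1 := by
  nlinarith [Real.sq_sqrt h.hk0.le, Real.sqrt_nonneg k, h.hk1]
lemma hw0 (h : OK k ε) : 0 < wk k := by unfold wk; linarith [h.hsq0]
lemma hw4 (h : OK k ε) : wk k < 1/4 := by unfold wk; linarith [h.hsq1]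
lemma hwsq (h : OK k ε) : (wk k)^2 = k/16 := by
  unfold wk; rw [div_pow, Real.sq_sqrt h.hk0.le]; norm_num
lemma hw3 (h : OK k ε) : (wk k)^3 = k * Real.sqrt k / 64 := by
  unfold wk
  rw [div_pow, pow_succ, Real.sq_sqrt h.hk0.le]
  norm_num
lemma hsqk1 (h : OK k ε) : (1 - k) * Real.sqrt k < 1 := by
  nlinarith [h.hsq1, h.hsq0, h.hk0, h.hk1]
lemma he1000 (h : OK k ε) : ε < 1/1000 := by
  have h1 := h.hes
  have h2 := h.hsqk1
  linarith
lemma hek1 (h : OK k ε) : ε < 1 - k := by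
  have h1 := h.hes
  have h2 : (1 - k) * Real.sqrt k ≤ (1 - k) * 1 :=
    mul_le_mul_of_nonneg_left h.hsq1.le (by nlinarith [h.hk1])
  nlinarith [h.hk1]
lemma h1ke (h : OK k ε) : 0 < 1 - k - ε := by linarith [h.hek1]
lemma he12 (h : OK k ε) : ε < 1/2 := by linarith [h.he1000]
lemma hee (h : OK k ε) : 0 < ε - ε^2 := by nlinarith [h.he0, h.he12]
lemma hc1 (h : OK k ε) : 0 < cc1 ε := by
  unfold cc1
  have h2 : (0:ℝ) < (1/2 - ε)^2 := by nlinarith [h.he12]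
  exact div_pos (by linarith [h.he0]) h2
lemma hc2 (h : OK k ε) : 0 < cc2 k ε := by
  unfold cc2; exact div_pos (by linarith [h.hk0]) h.hee
lemma hc3 (h : OK k ε) : 0 < cc3 k ε := by unfold cc3; linarith [h.h1ke]
lemma hT0 (h : OK k ε) : 0 < Tk k ε := by
  unfold Tk; have := h.h1ke; have := h.hee; positivity
lemma hTle (h : OK k ε) : Tk k ε ≤ ε / 56 := by
  unfold Tk
  nlinarith [h.h1ke, h.hee, h.he0, h.hk0, h.he12]
lemma hc3w (h : OK k ε) : cc3 k ε * (wk k)^2 / 2 = cc2 k ε * Tk k ε := by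
  have hne : ε - ε^2 ≠ 0 := ne_of_gt h.hee
  unfold cc3 cc2 Tk
  rw [h.hwsq]
  rw [show k*2/(ε-ε^2) * ((1-k-ε)*(ε-ε^2)/56) = k*2*(1-k-ε)/56 * ((ε-ε^2)/(ε-ε^2)) by ring,
    div_self hne]
  ring
lemma hkc2 (h : OK k ε) : cc2 k ε * ((ε - ε^2)/2) = k := by
  have hne : ε - ε^2 ≠ 0 := ne_of_gt h.hee
  unfold cc2
  rw [show k*2/(ε-ε^2) * ((ε-ε^2)/2) = k * ((ε-ε^2)/(ε-ε^2)) by ring, div_self hne, mul_one]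
lemma hdisc (h : OK k ε) : 0 ≤ (1/2 - wk k)^2 - 4 * Tk k ε := by
  have h1 : Tk k ε ≤ ε/56 := h.hTle
  have h2 : ε < 1/1000 := h.he1000
  have h3 : wk k < 1/4 := h.hw4
  have h4 : 0 < wk k := h.hw0
  nlinarith
lemma hdel_id (h : OK k ε) : dlt k ε * ((1/2 - wk k) - dlt k ε) = Tk k ε := by
  unfold dlt
  have hr := Real.sq_sqrt h.hdisc
  set r := Real.sqrt ((1/2 - wk k)^2 - 4 * Tk k ε)
  nlinarith [hr]
lemma hdel_le (h : OK k ε) : dlt k ε ≤ (1/2 - wk k)/2 := by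
  unfold dlt
  have : 0 ≤ Real.sqrt ((1/2 - wk k)^2 - 4 * Tk k ε) := Real.sqrt_nonneg _
  linarith
lemma hdel_nonneg (h : OK k ε) : 0 ≤ dlt k ε := by
  have h1 : ((1/2 - wk k)^2 - 4*Tk k ε) ≤ (1/2 - wk k)^2 := by nlinarith [h.hT0]
  have hr : Real.sqrt ((1/2 - wk k)^2 - 4*Tk k ε) ≤ 1/2 - wk k := by
    calc Real.sqrt ((1/2 - wk k)^2 - 4*Tk k ε) ≤ Real.sqrt ((1/2 - wk k)^2) :=
          Real.sqrt_le_sqrt h1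
      _ = 1/2 - wk k := Real.sqrt_sq (by linarith [h.hw4])
  unfold dlt
  linarith
lemma hdel8T (h : OK k ε) : dlt k ε ≤ 8 * Tk k ε := by
  have h1 := h.hdel_id
  have h2 := h.hdel_le
  have h3 : wk k < 1/4 := h.hw4
  have h4 : (1/8 : ℝ) ≤ (1/2 - wk k) - dlt k ε := by linarith
  have h5 : 0 ≤ dlt k ε := h.hdel_nonneg
  nlinarith
lemma hdel0 (h : OK k ε) : 0 < dlt k ε := by
  have h1 := h.hdel_id
  have h2 := h.hdel_le
  have h5 : 0 ≤ dlt k ε := h.hdel_nonneg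
  rcases eq_or_lt_of_le h5 with he | hl
  · exfalso; rw [← he] at h1; simp at h1; linarith [h.hT0]
  · exact hl
lemma hdele7 (h : OK k ε) : dlt k ε ≤ ε / 7 := by
  have := h.hdel8T; have := h.hTle; linarith
lemma hdele (h : OK k ε) : dlt k ε < ε := by linarith [h.hdele7, h.he0]
lemma hdelw (h : OK k ε) : dlt k ε < wk k := by
  have h1 : dlt k ε ≤ ε/7 := h.hdele7
  have h2 : ε < 1/1000 := h.he1000
  have h3 : ε < (1-k) * Real.sqrt k / 1000 := h.hes
  have h4 : (1-k) * Real.sqrt k ≤ Real.sqrt k := by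
    nlinarith [h.hk0, Real.sqrt_nonneg k]
  have h6 : ε < Real.sqrt k / 1000 := by linarith
  unfold wk; nlinarith [h.hsq0]
lemma hmargin (h : OK k ε) : dlt k ε * (k + ε) < cc3 k ε * (wk k)^3 / 12 := by
  have h1 : dlt k ε ≤ 8 * Tk k ε := h.hdel8T
  have h2 : 8 * Tk k ε = (1-k-ε)*(ε-ε^2)/7 := by unfold Tk; ring
  have h3 : dlt k ε ≤ (1-k-ε)*ε/7 := by
    rw [h2] at h1
    nlinarith [h.h1ke, h.he0]
  have h4 : cc3 k ε * (wk k)^3 / 12 = (1-k-ε) * (k * Real.sqrt k) / 672 := by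
    unfold cc3; rw [h.hw3]; ring
  have h5 : ε < Real.sqrt k / 1000 := by
    have h4 : (1-k) * Real.sqrt k ≤ Real.sqrt k := by
      nlinarith [h.hk0, Real.sqrt_nonneg k]
    linarith [h.hes]
  rw [h4]
  have h6 : dlt k ε * (k + ε) ≤ (1-k-ε)*ε/7 * (k + ε) := by
    have := h.hdel0
    nlinarith [h.hk0, h.he0]
  have h7 : (1-k-ε)*ε/7 * (k + ε) < (1-k-ε) * (k * Real.sqrt k) / 672 := by
    have s1 : ε * (k+ε) < 2*k*ε := by nlinarith [h.hek, h.he0]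
    have s2 : 2*k*ε < k*Real.sqrt k/96 := by
      have : 2*ε < Real.sqrt k/96 := by linarith [Real.sqrt_nonneg k]
      nlinarith [mul_lt_mul_of_pos_left this h.hk0]
    have s3 : ε*(k+ε) < k*Real.sqrt k/96 := lt_trans s1 s2
    have s4 : (1-k-ε) * (ε*(k+ε)) < (1-k-ε) * (k*Real.sqrt k/96) :=
      mul_lt_mul_of_pos_left s3 h.h1ke
    nlinarith [s4]
  linarith

end OK

lemma measurableSet_square : MeasurableSet square :=
  (measurableSet_Icc).prod (measurableSet_Icc)

lemma volume_square_lt : volume square < ⊤ := by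
  unfold square
  exact (isCompact_Icc.prod isCompact_Icc).measure_lt_top

lemma intOnSquare (g : ℝ × ℝ → ℝ) (hm : Measurable g) (C : ℝ)
    (hC : ∀ p ∈ square, |g p| ≤ C) : IntegrableOn g square := by
  refine Integrable.mono' (integrableOn_const (C := C) volume_square_lt.ne)
    hm.aestronglyMeasurable ?_
  refine (ae_restrict_iff' measurableSet_square).2 (ae_of_all _ fun p hp => ?_)
  simpa [Real.norm_eq_abs] using hC p hp

lemma iterInt (T : Set (ℝ × ℝ)) (hT : MeasurableSet T) (hTs : T ⊆ square)
    (g : ℝ × ℝ → ℝ) (hm : Measurable g) (C : ℝ) (hC : ∀ p ∈ square, |g p| ≤ C) :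
    ∫ p in T, g p = ∫ x, ∫ y, T.indicator g (x, y) := by
  have hint : Integrable (T.indicator g) :=
    (integrable_indicator_iff hT).2 (((intOnSquare g hm C hC)).mono_set hTs)
  rw [← MeasureTheory.integral_indicator hT]
  exact MeasureTheory.integral_prod _ hint

lemma ind_eval_Ioo (l u : ℝ) (h : l ≤ u) (g : ℝ → ℝ) :
    ∫ y, (Ioo l u).indicator g y = ∫ y in l..u, g y := by
  rw [MeasureTheory.integral_indicator measurableSet_Ioo,
    ← MeasureTheory.integral_Ioc_eq_integral_Ioo, ← intervalIntegral.integral_of_le h]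

lemma ind_int_Ioo (l u : ℝ) (g : ℝ → ℝ) (hg : Continuous g) :
    Integrable ((Ioo l u).indicator g) :=
  (integrable_indicator_iff measurableSet_Ioo).2
    ((hg.integrableOn_Icc).mono_set Ioo_subset_Icc_self)

lemma poly_int (l u C0 C1 C2 : ℝ) :
    ∫ a in l..u, (C0 + C1 * a + C2 * a^2) =
      C0*(u-l) + C1*(u^2-l^2)/2 + C2*(u^3-l^3)/3 := by
  have i1 : IntervalIntegrable (fun a : ℝ => C1 * a) volume l u :=
    (continuous_const.mul continuous_id).intervalIntegrable l u
  have i2 : IntervalIntegrable (fun a : ℝ => C2 * a^2) volume l u :=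
    (continuous_const.mul (continuous_pow 2)).intervalIntegrable l u
  rw [intervalIntegral.integral_add ((intervalIntegrable_const).add i1) i2,
    intervalIntegral.integral_add (intervalIntegrable_const) i1,
    intervalIntegral.integral_const, intervalIntegral.integral_const_mul,
    intervalIntegral.integral_const_mul, integral_id, integral_pow]
  push_cast
  simp only [smul_eq_mul]
  ring

/-- Master lemma: integral of a function vanishing outside `[t0, t3]` and agreeing with
`g1, g2, g3` on the three open subintervals. -/
lemma inner3 (t0 t1 t2 t3 : ℝ) (h01 : t0 ≤ t1) (h12 : t1 ≤ t2) (h23 : t2 ≤ t3)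
    (g1 g2 g3 : ℝ → ℝ) (hg1 : Continuous g1) (hg2 : Continuous g2) (hg3 : Continuous g3)
    (h : ℝ → ℝ)
    (e1 : ∀ y ∈ Ioo t0 t1, h y = g1 y) (e2 : ∀ y ∈ Ioo t1 t2, h y = g2 y)
    (e3 : ∀ y ∈ Ioo t2 t3, h y = g3 y) (e0 : ∀ y, (y < t0 ∨ t3 < y) → h y = 0) :
    ∫ y, h y = (∫ y in t0..t1, g1 y) + (∫ y in t1..t2, g2 y) + (∫ y in t2..t3, g3 y) := by
  have hzero : volume ({t0, t1, t2, t3} : Set ℝ) = 0 :=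
    (Set.toFinite _).measure_zero _
  have hae : ∀ᵐ y : ℝ, y ∉ ({t0, t1, t2, t3} : Set ℝ) :=
    measure_eq_zero_iff_ae_notMem.mp hzero
  have heq : h =ᵐ[volume] fun y =>
      (Ioo t0 t1).indicator g1 y + (Ioo t1 t2).indicator g2 y + (Ioo t2 t3).indicator g3 y := by
    filter_upwards [hae] with y hy
    simp only [Set.mem_insert_iff, Set.mem_singleton_iff, not_or] at hy
    obtain ⟨n0, n1, n2, n3⟩ := hy
    rcases lt_trichotomy y t0 with c0 | c0 | c0
    · rw [e0 y (Or.inl c0)]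
      rw [Set.indicator_of_notMem (by simp only [mem_Ioo, not_and_or, not_lt]; left; linarith),
        Set.indicator_of_notMem (by simp only [mem_Ioo, not_and_or, not_lt]; left; linarith),
        Set.indicator_of_notMem (by simp only [mem_Ioo, not_and_or, not_lt]; left; linarith)]
      norm_num
    · exact absurd c0 n0
    rcases lt_trichotomy y t1 with c1 | c1 | c1
    · rw [e1 y (mem_Ioo.mpr ⟨c0, c1⟩), Set.indicator_of_mem (mem_Ioo.mpr ⟨c0, c1⟩),
        Set.indicator_of_notMem (by simp only [mem_Ioo, not_and_or, not_lt]; left; linarith),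
        Set.indicator_of_notMem (by simp only [mem_Ioo, not_and_or, not_lt]; left; linarith)]
      ring
    · exact absurd c1 n1
    rcases lt_trichotomy y t2 with c2 | c2 | c2
    · rw [e2 y (mem_Ioo.mpr ⟨c1, c2⟩), Set.indicator_of_mem (mem_Ioo.mpr ⟨c1, c2⟩),
        Set.indicator_of_notMem (by simp only [mem_Ioo, not_and_or, not_lt]; right; linarith),
        Set.indicator_of_notMem (by simp only [mem_Ioo, not_and_or, not_lt]; left; linarith)]
      ring
    · exact absurd c2 n2
    rcases lt_trichotomy y t3 with c3 | c3 | c3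
    · rw [e3 y (mem_Ioo.mpr ⟨c2, c3⟩), Set.indicator_of_mem (mem_Ioo.mpr ⟨c2, c3⟩),
        Set.indicator_of_notMem (by simp only [mem_Ioo, not_and_or, not_lt]; right; linarith),
        Set.indicator_of_notMem (by simp only [mem_Ioo, not_and_or, not_lt]; right; linarith)]
      ring
    · exact absurd c3 n3
    · rw [e0 y (Or.inr c3)]
      rw [Set.indicator_of_notMem (by simp only [mem_Ioo, not_and_or, not_lt]; right; linarith),
        Set.indicator_of_notMem (by simp only [mem_Ioo, not_and_or, not_lt]; right; linarith),
        Set.indicator_of_notMem (by simp only [mem_Ioo, not_and_or, not_lt]; right; linarith)]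
      norm_num
  rw [integral_congr_ae heq]
  have i1 : Integrable (fun y => (Ioo t0 t1).indicator g1 y) := ind_int_Ioo _ _ _ hg1
  have i2 : Integrable (fun y => (Ioo t1 t2).indicator g2 y) := ind_int_Ioo _ _ _ hg2
  have i3 : Integrable (fun y => (Ioo t2 t3).indicator g3 y) := ind_int_Ioo _ _ _ hg3
  have i12 : Integrable (fun y => (Ioo t0 t1).indicator g1 y + (Ioo t1 t2).indicator g2 y) :=
    i1.add i2
  rw [integral_add i12 i3, integral_add i1 i2,
    ind_eval_Ioo _ _ h01, ind_eval_Ioo _ _ h12, ind_eval_Ioo _ _ h23]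
/-- two-piece specialization -/
lemma inner2 (t0 t1 t2 : ℝ) (h01 : t0 ≤ t1) (h12 : t1 ≤ t2)
    (g1 g2 : ℝ → ℝ) (hg1 : Continuous g1) (hg2 : Continuous g2)
    (h : ℝ → ℝ)
    (e1 : ∀ y ∈ Ioo t0 t1, h y = g1 y) (e2 : ∀ y ∈ Ioo t1 t2, h y = g2 y)
    (e0 : ∀ y, (y < t0 ∨ t2 < y) → h y = 0) :
    ∫ y, h y = (∫ y in t0..t1, g1 y) + (∫ y in t1..t2, g2 y) := by
  have := inner3 t0 t1 t2 t2 h01 h12 le_rfl g1 g2 (fun _ => 0) hg1 hg2 continuous_const h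
    e1 e2 (fun y hy => absurd hy.1 (not_lt.mpr hy.2.le))
    (fun y hy => e0 y hy)
  simpa using this

/-- one-piece specialization -/
lemma inner1 (t0 t1 : ℝ) (h01 : t0 ≤ t1)
    (g1 : ℝ → ℝ) (hg1 : Continuous g1) (h : ℝ → ℝ)
    (e1 : ∀ y ∈ Ioo t0 t1, h y = g1 y)
    (e0 : ∀ y, (y < t0 ∨ t1 < y) → h y = 0) :
    ∫ y, h y = ∫ y in t0..t1, g1 y := by
  have := inner2 t0 t1 t1 h01 le_rfl g1 (fun _ => 0) hg1 continuous_const h e1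
    (fun y hy => absurd hy.1 (not_lt.mpr hy.2.le)) e0
  simpa using this


lemma mem_square_iff (x y : ℝ) : (x, y) ∈ square ↔ (0 ≤ x ∧ x ≤ 1) ∧ (0 ≤ y ∧ y ≤ 1) := by
  simp only [square, Set.mem_prod, Set.mem_Icc]

lemma fke_eq1 {k ε : ℝ} {p : ℝ × ℝ} (h1 : 1/2 + ε ≤ p.2 - p.1) : fke k ε p = cc1 ε := by
  unfold fke cc1; rw [if_pos h1]

lemma fke_eq2 {k ε : ℝ} {p : ℝ × ℝ} (h1 : 1/2 ≤ p.2 - p.1) (h2 : p.2 - p.1 < 1/2 + ε) :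
    fke k ε p = cc2 k ε := by
  unfold fke cc2; rw [if_neg (by linarith), if_pos h1]

lemma fke_eq3 {k ε : ℝ} {p : ℝ × ℝ} (he : 0 ≤ ε) (h1 : p.2 - p.1 < 1/2) :
    fke k ε p = cc3 k ε := by
  unfold fke cc3; rw [if_neg (by linarith), if_neg (by linarith)]

lemma measurable_fke (k ε : ℝ) : Measurable (fke k ε) := by
  unfold fke
  refine Measurable.ite ?_ measurable_const (Measurable.ite ?_ measurable_const measurable_const)
  · exact measurableSet_le measurable_const (measurable_snd.sub measurable_fst)
  · exact measurableSet_le measurable_const (measurable_snd.sub measurable_fst)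


variable {k ε : ℝ}

lemma fke_bound (h : OK k ε) : ∀ p ∈ square, |fke k ε p| ≤ cc1 ε + cc2 k ε + cc3 k ε := by
  intro p _
  have h1 := h.hc1; have h2 := h.hc2; have h3 := h.hc3
  unfold fke
  unfold cc1 cc2 cc3 at *
  split_ifs <;> rw [abs_of_nonneg (by linarith)] <;> linarith

lemma INT1 (h : OK k ε) : ∫ p in square, fke k ε p = 1 := by
  have he12 := h.he12
  have he0 := h.he0
  rw [iterInt square measurableSet_square subset_rfl (fke k ε) (measurable_fke k ε)
    (cc1 ε + cc2 k ε + cc3 k ε) (fke_bound h)]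
  have e1 : ∀ x ∈ Ioo (0:ℝ) (1/2 - ε), (∫ y, square.indicator (fke k ε) (x, y)) =
      cc3 k ε * (x + 1/2) + cc2 k ε * ε + cc1 ε * (1/2 - ε - x) := by
    intro x hx
    obtain ⟨hx0, hx1⟩ := hx
    have key := inner3 0 (x + 1/2) (x + 1/2 + ε) 1 (by linarith) (by linarith) (by linarith)
      (fun _ => cc3 k ε) (fun _ => cc2 k ε) (fun _ => cc1 ε)
      continuous_const continuous_const continuous_const
      (fun y => square.indicator (fke k ε) (x, y))
      (fun y hy => by
        beta_reduce
        rw [Set.indicator_of_mem ((mem_square_iff x y).2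
          ⟨⟨by linarith, by linarith⟩, ⟨by linarith [hy.1], by linarith [hy.2]⟩⟩)]
        exact fke_eq3 he0.le (show y - x < 1/2 by linarith [hy.2]))
      (fun y hy => by
        beta_reduce
        rw [Set.indicator_of_mem ((mem_square_iff x y).2
          ⟨⟨by linarith, by linarith⟩, ⟨by linarith [hy.1], by linarith [hy.2]⟩⟩)]
        exact fke_eq2 (show (1:ℝ)/2 ≤ y - x by linarith [hy.1])
          (show y - x < 1/2 + ε by linarith [hy.2]))
      (fun y hy => by
        beta_reduce
        rw [Set.indicator_of_mem ((mem_square_iff x y).2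
          ⟨⟨by linarith, by linarith⟩, ⟨by linarith [hy.1], by linarith [hy.2]⟩⟩)]
        exact fke_eq1 (show (1:ℝ)/2 + ε ≤ y - x by linarith [hy.1]))
      (fun y hy => by
        beta_reduce
        rw [Set.indicator_of_notMem (fun hm => by
          rw [mem_square_iff] at hm
          rcases hy with hc | hc <;> linarith [hm.2.1, hm.2.2])])
    rw [key, intervalIntegral.integral_const, intervalIntegral.integral_const,
      intervalIntegral.integral_const]
    simp only [smul_eq_mul]
    ring
  have e2 : ∀ x ∈ Ioo (1/2 - ε) (1/2:ℝ), (∫ y, square.indicator (fke k ε) (x, y)) =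
      cc3 k ε * (x + 1/2) + cc2 k ε * (1/2 - x) := by
    intro x hx
    obtain ⟨hx0, hx1⟩ := hx
    have key := inner2 0 (x + 1/2) 1 (by linarith) (by linarith)
      (fun _ => cc3 k ε) (fun _ => cc2 k ε) continuous_const continuous_const
      (fun y => square.indicator (fke k ε) (x, y))
      (fun y hy => by
        beta_reduce
        rw [Set.indicator_of_mem ((mem_square_iff x y).2
          ⟨⟨by linarith, by linarith⟩, ⟨by linarith [hy.1], by linarith [hy.2]⟩⟩)]
        exact fke_eq3 he0.le (show y - x < 1/2 by linarith [hy.2]))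
      (fun y hy => by
        beta_reduce
        rw [Set.indicator_of_mem ((mem_square_iff x y).2
          ⟨⟨by linarith, by linarith⟩, ⟨by linarith [hy.1], by linarith [hy.2]⟩⟩)]
        exact fke_eq2 (show (1:ℝ)/2 ≤ y - x by linarith [hy.1])
          (show y - x < 1/2 + ε by linarith [hy.2]))
      (fun y hy => by
        beta_reduce
        rw [Set.indicator_of_notMem (fun hm => by
          rw [mem_square_iff] at hm
          rcases hy with hc | hc <;> linarith [hm.2.1, hm.2.2])])
    rw [key, intervalIntegral.integral_const, intervalIntegral.integral_const]
    simp only [smul_eq_mul]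
    ring
  have e3 : ∀ x ∈ Ioo (1/2:ℝ) 1, (∫ y, square.indicator (fke k ε) (x, y)) = cc3 k ε := by
    intro x hx
    obtain ⟨hx0, hx1⟩ := hx
    have key := inner1 0 1 (by linarith)
      (fun _ => cc3 k ε) continuous_const
      (fun y => square.indicator (fke k ε) (x, y))
      (fun y hy => by
        beta_reduce
        rw [Set.indicator_of_mem ((mem_square_iff x y).2
          ⟨⟨by linarith, by linarith⟩, ⟨by linarith [hy.1], by linarith [hy.2]⟩⟩)]
        exact fke_eq3 he0.le (show y - x < 1/2 by linarith [hy.2]))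
      (fun y hy => by
        beta_reduce
        rw [Set.indicator_of_notMem (fun hm => by
          rw [mem_square_iff] at hm
          rcases hy with hc | hc <;> linarith [hm.2.1, hm.2.2])])
    rw [key, intervalIntegral.integral_const]
    simp only [smul_eq_mul]
    ring
  have e0 : ∀ x : ℝ, (x < 0 ∨ 1 < x) → (∫ y, square.indicator (fke k ε) (x, y)) = 0 := by
    intro x hx
    have : (fun y => square.indicator (fke k ε) (x, y)) = fun _ => 0 := by
      funext y
      beta_reduce
      rw [Set.indicator_of_notMem (fun hm => by
        rw [mem_square_iff] at hm
        rcases hx with hc | hc <;> linarith [hm.1.1, hm.1.2])]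
    rw [this, integral_zero]
  have outer := inner3 0 (1/2 - ε) (1/2) 1 (by linarith) (by linarith) (by linarith)
    (fun x => cc3 k ε * (x + 1/2) + cc2 k ε * ε + cc1 ε * (1/2 - ε - x))
    (fun x => cc3 k ε * (x + 1/2) + cc2 k ε * (1/2 - x))
    (fun _ => cc3 k ε)
    (by fun_prop) (by fun_prop) continuous_const
    (fun x => ∫ y, square.indicator (fke k ε) (x, y)) e1 e2 e3 e0
  rw [outer]
  have hp1 : ∀ x : ℝ, cc3 k ε * (x + 1/2) + cc2 k ε * ε + cc1 ε * (1/2 - ε - x) =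
      (cc3 k ε * (1/2) + cc2 k ε * ε + cc1 ε * (1/2 - ε)) + (cc3 k ε - cc1 ε) * x + 0 * x^2 :=
    fun x => by ring
  have hp2 : ∀ x : ℝ, cc3 k ε * (x + 1/2) + cc2 k ε * (1/2 - x) =
      (cc3 k ε * (1/2) + cc2 k ε * (1/2)) + (cc3 k ε - cc2 k ε) * x + 0 * x^2 :=
    fun x => by ring
  simp_rw [hp1, hp2]
  rw [poly_int, poly_int, intervalIntegral.integral_const]
  simp only [smul_eq_mul]
  have hA : cc1 ε * ((1/2 - ε)^2/2) = ε := by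
    have hne : ((1:ℝ)/2 - ε)^2 ≠ 0 := by
      have h2 := h.he12
      have : (1:ℝ)/2 - ε ≠ 0 := by intro hc; rw [sub_eq_zero] at hc; linarith
      positivity
    have hne2 : (1:ℝ) - 2*ε ≠ 0 := by
      have h2 := h.he12; intro hc; linarith
    unfold cc1
    have hne' : ((1:ℝ)/2 - ε)^2 ≠ 0 := (pow_pos (by linarith) 2).ne'
    rw [show ε * 2 / (1/2 - ε)^2 * ((1/2 - ε)^2/2) = ε * ((1/2-ε)^2 / (1/2-ε)^2) by ring,
      div_self hne', mul_one]
  have hB : cc2 k ε * ((ε - ε^2)/2) = k := h.hkc2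
  have hC : cc3 k ε * (7/8) = 1 - k - ε := by unfold cc3; ring
  linear_combination hA + hB + hC

lemma memT2 (d x y : ℝ) : ((x,y) ∈ ({p : ℝ × ℝ | 1/2 + d < p.2 - p.1} ∩ square)) ↔
    (1/2 + d < y - x ∧ ((0 ≤ x ∧ x ≤ 1) ∧ (0 ≤ y ∧ y ≤ 1))) := by
  rw [Set.mem_inter_iff, mem_square_iff, Set.mem_setOf_eq]

lemma memT3 (k d x y : ℝ) :
    ((x,y) ∈ ({p : ℝ × ℝ | p.1 < ell k p.2 ∧ p.2 - p.1 ≤ 1/2 + d} ∩ square)) ↔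
    ((x < ell k y ∧ y - x ≤ 1/2 + d) ∧ ((0 ≤ x ∧ x ≤ 1) ∧ (0 ≤ y ∧ y ≤ 1))) := by
  rw [Set.mem_inter_iff, mem_square_iff, Set.mem_setOf_eq]

lemma memT4 (k x y : ℝ) :
    ((x,y) ∈ ({p : ℝ × ℝ | p.1 < ell k p.2 ∧ p.2 - p.1 < 1/2} ∩ square)) ↔
    ((x < ell k y ∧ y - x < 1/2) ∧ ((0 ≤ x ∧ x ≤ 1) ∧ (0 ≤ y ∧ y ≤ 1))) := by
  rw [Set.mem_inter_iff, mem_square_iff, Set.mem_setOf_eq]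

lemma measurable_ellsnd (k : ℝ) : Measurable fun p : ℝ × ℝ => ell k p.2 := by
  unfold ell
  exact ((measurable_snd.div_const 2).sub measurable_const).add measurable_const

lemma INT2 (h : OK k ε) {d : ℝ} (hd0 : 0 ≤ d) (hde : d ≤ ε) :
    ∫ p in ({p : ℝ × ℝ | 1/2 + d < p.2 - p.1} ∩ square), fke k ε p =
      ε + cc2 k ε * ((ε - d)*(1/2 - ε) + (ε - d)^2/2) := by
  have he12 := h.he12
  have he0 := h.he0
  have hTm : MeasurableSet ({p : ℝ × ℝ | 1/2 + d < p.2 - p.1} ∩ square) :=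
    (measurableSet_lt measurable_const (measurable_snd.sub measurable_fst)).inter
      measurableSet_square
  rw [iterInt _ hTm inter_subset_right (fke k ε) (measurable_fke k ε)
    (cc1 ε + cc2 k ε + cc3 k ε) (fke_bound h)]
  set T := {p : ℝ × ℝ | 1/2 + d < p.2 - p.1} ∩ square with hT
  have e1 : ∀ x ∈ Ioo (0:ℝ) (1/2 - ε), (∫ y, T.indicator (fke k ε) (x, y)) =
      cc2 k ε * (ε - d) + cc1 ε * (1/2 - ε - x) := by
    intro x hx
    obtain ⟨hx0, hx1⟩ := hx
    have key := inner2 (x + 1/2 + d) (x + 1/2 + ε) 1 (by linarith) (by linarith)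
      (fun _ => cc2 k ε) (fun _ => cc1 ε) continuous_const continuous_const
      (fun y => T.indicator (fke k ε) (x, y))
      (fun y hy => by
        beta_reduce
        rw [Set.indicator_of_mem ((memT2 d x y).2
          ⟨by linarith [hy.1], ⟨by linarith, by linarith⟩, by linarith [hy.1], by linarith [hy.2]⟩)]
        exact fke_eq2 (show (1:ℝ)/2 ≤ y - x by linarith [hy.1])
          (show y - x < 1/2 + ε by linarith [hy.2]))
      (fun y hy => by
        beta_reduce
        rw [Set.indicator_of_mem ((memT2 d x y).2
          ⟨by linarith [hy.1], ⟨by linarith, by linarith⟩, by linarith [hy.1], by linarith [hy.2]⟩)]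
        exact fke_eq1 (show (1:ℝ)/2 + ε ≤ y - x by linarith [hy.1]))
      (fun y hy => by
        beta_reduce
        rw [Set.indicator_of_notMem (fun hm => by
          rw [memT2] at hm
          rcases hy with hc | hc <;> linarith [hm.1, hm.2.2.2])])
    rw [key, intervalIntegral.integral_const, intervalIntegral.integral_const]
    simp only [smul_eq_mul]
    ring
  have e2 : ∀ x ∈ Ioo (1/2 - ε) (1/2 - d), (∫ y, T.indicator (fke k ε) (x, y)) =
      cc2 k ε * (1/2 - d - x) := by
    intro x hx
    obtain ⟨hx0, hx1⟩ := hx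
    have key := inner1 (x + 1/2 + d) 1 (by linarith)
      (fun _ => cc2 k ε) continuous_const
      (fun y => T.indicator (fke k ε) (x, y))
      (fun y hy => by
        beta_reduce
        rw [Set.indicator_of_mem ((memT2 d x y).2
          ⟨by linarith [hy.1], ⟨by linarith, by linarith⟩, by linarith [hy.1], by linarith [hy.2]⟩)]
        exact fke_eq2 (show (1:ℝ)/2 ≤ y - x by linarith [hy.1])
          (show y - x < 1/2 + ε by linarith [hy.2]))
      (fun y hy => by
        beta_reduce
        rw [Set.indicator_of_notMem (fun hm => by
          rw [memT2] at hm
          rcases hy with hc | hc <;> linarith [hm.1, hm.2.2.2])])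
    rw [key, intervalIntegral.integral_const]
    simp only [smul_eq_mul]
    ring
  have e3 : ∀ x ∈ Ioo (1/2 - d) (1:ℝ), (∫ y, T.indicator (fke k ε) (x, y)) = 0 := by
    intro x hx
    obtain ⟨hx0, hx1⟩ := hx
    have : (fun y => T.indicator (fke k ε) (x, y)) = fun _ => (0:ℝ) := by
      funext y
      beta_reduce
      rw [Set.indicator_of_notMem (fun hm => by
        rw [memT2] at hm
        linarith [hm.1, hm.2.2.2])]
    rw [this, integral_zero]
  have e0 : ∀ x : ℝ, (x < 0 ∨ 1 < x) → (∫ y, T.indicator (fke k ε) (x, y)) = 0 := by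
    intro x hx
    have : (fun y => T.indicator (fke k ε) (x, y)) = fun _ => (0:ℝ) := by
      funext y
      beta_reduce
      rw [Set.indicator_of_notMem (fun hm => by
        rw [memT2] at hm
        rcases hx with hc | hc <;> linarith [hm.2.1.1, hm.2.1.2])]
    rw [this, integral_zero]
  have outer := inner3 0 (1/2 - ε) (1/2 - d) 1 (by linarith) (by linarith) (by linarith)
    (fun x => cc2 k ε * (ε - d) + cc1 ε * (1/2 - ε - x))
    (fun x => cc2 k ε * (1/2 - d - x))
    (fun _ => (0:ℝ))
    (by fun_prop) (by fun_prop) continuous_const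
    (fun x => ∫ y, T.indicator (fke k ε) (x, y)) e1 e2 e3 e0
  rw [outer]
  have hp1 : ∀ x : ℝ, cc2 k ε * (ε - d) + cc1 ε * (1/2 - ε - x) =
      (cc2 k ε * (ε - d) + cc1 ε * (1/2 - ε)) + (-(cc1 ε)) * x + 0 * x^2 := fun x => by ring
  have hp2 : ∀ x : ℝ, cc2 k ε * (1/2 - d - x) =
      (cc2 k ε * (1/2 - d)) + (-(cc2 k ε)) * x + 0 * x^2 := fun x => by ring
  simp_rw [hp1, hp2]
  rw [poly_int, poly_int, intervalIntegral.integral_zero]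
  have hA : cc1 ε * ((1/2 - ε)^2/2) = ε := by
    have hne2 : (1:ℝ) - 2*ε ≠ 0 := by intro hc; linarith
    unfold cc1
    have hne' : ((1:ℝ)/2 - ε)^2 ≠ 0 := (pow_pos (by linarith) 2).ne'
    rw [show ε * 2 / (1/2 - ε)^2 * ((1/2 - ε)^2/2) = ε * ((1/2-ε)^2 / (1/2-ε)^2) by ring,
      div_self hne', mul_one]
  linear_combination hA

lemma INT3 (h : OK k ε) :
    ∫ p in ({p : ℝ × ℝ | p.1 < ell k p.2 ∧ p.2 - p.1 ≤ 1/2 + dlt k ε} ∩ square), fke k ε p =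
      cc3 k ε * (wk k)^2/2 + cc2 k ε * (dlt k ε * wk k + (dlt k ε)^2/2) := by
  have he12 := h.he12
  have he0 := h.he0
  have hw0 := h.hw0
  have hw4 := h.hw4
  have hd0 := h.hdel0
  have hde := h.hdele
  have hdw := h.hdelw
  have he1000 := h.he1000
  have hTm : MeasurableSet ({p : ℝ × ℝ | p.1 < ell k p.2 ∧ p.2 - p.1 ≤ 1/2 + dlt k ε} ∩ square) := by
    refine MeasurableSet.inter ?_ measurableSet_square
    exact (measurableSet_lt measurable_fst (measurable_ellsnd k)).inter
      (measurableSet_le (measurable_snd.sub measurable_fst) measurable_const)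
  rw [iterInt _ hTm inter_subset_right (fke k ε) (measurable_fke k ε)
    (cc1 ε + cc2 k ε + cc3 k ε) (fke_bound h)]
  set T := {p : ℝ × ℝ | p.1 < ell k p.2 ∧ p.2 - p.1 ≤ 1/2 + dlt k ε} ∩ square with hT
  have hell : ∀ y : ℝ, ell k y = y/2 - 1/4 + wk k/2 := fun y => rfl
  have e1 : ∀ x ∈ Ioo (0:ℝ) (wk k), (∫ y, T.indicator (fke k ε) (x, y)) =
      cc3 k ε * (wk k - x) + cc2 k ε * dlt k ε := by
    intro x hx
    obtain ⟨hx0, hx1⟩ := hx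
    have key := inner2 (2*x + 1/2 - wk k) (x + 1/2) (x + 1/2 + dlt k ε)
      (by linarith) (by linarith)
      (fun _ => cc3 k ε) (fun _ => cc2 k ε) continuous_const continuous_const
      (fun y => T.indicator (fke k ε) (x, y))
      (fun y hy => by
        beta_reduce
        rw [Set.indicator_of_mem ((memT3 k (dlt k ε) x y).2
          ⟨⟨by rw [hell]; linarith [hy.1], by linarith [hy.2]⟩,
           ⟨by linarith, by linarith⟩, by linarith [hy.1], by linarith [hy.2]⟩)]
        exact fke_eq3 he0.le (show y - x < 1/2 by linarith [hy.2]))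
      (fun y hy => by
        beta_reduce
        rw [Set.indicator_of_mem ((memT3 k (dlt k ε) x y).2
          ⟨⟨by rw [hell]; linarith [hy.1], by linarith [hy.2]⟩,
           ⟨by linarith, by linarith⟩, by linarith [hy.1], by linarith [hy.2]⟩)]
        exact fke_eq2 (show (1:ℝ)/2 ≤ y - x by linarith [hy.1])
          (show y - x < 1/2 + ε by linarith [hy.2]))
      (fun y hy => by
        beta_reduce
        rw [Set.indicator_of_notMem (fun hm => by
          rw [memT3] at hm
          rw [hell] at hm
          rcases hy with hc | hc <;> linarith [hm.1.1, hm.1.2])])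
    rw [key, intervalIntegral.integral_const, intervalIntegral.integral_const]
    simp only [smul_eq_mul]
    ring
  have e2 : ∀ x ∈ Ioo (wk k) (wk k + dlt k ε), (∫ y, T.indicator (fke k ε) (x, y)) =
      cc2 k ε * (wk k + dlt k ε - x) := by
    intro x hx
    obtain ⟨hx0, hx1⟩ := hx
    have key := inner1 (2*x + 1/2 - wk k) (x + 1/2 + dlt k ε) (by linarith)
      (fun _ => cc2 k ε) continuous_const
      (fun y => T.indicator (fke k ε) (x, y))
      (fun y hy => by
        beta_reduce
        rw [Set.indicator_of_mem ((memT3 k (dlt k ε) x y).2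
          ⟨⟨by rw [hell]; linarith [hy.1], by linarith [hy.2]⟩,
           ⟨by linarith, by linarith⟩, by linarith [hy.1], by linarith [hy.2]⟩)]
        exact fke_eq2 (show (1:ℝ)/2 ≤ y - x by linarith [hy.1])
          (show y - x < 1/2 + ε by linarith [hy.2]))
      (fun y hy => by
        beta_reduce
        rw [Set.indicator_of_notMem (fun hm => by
          rw [memT3] at hm
          rw [hell] at hm
          rcases hy with hc | hc <;> linarith [hm.1.1, hm.1.2])])
    rw [key, intervalIntegral.integral_const]
    simp only [smul_eq_mul]
    ring
  have e0 : ∀ x : ℝ, (x < 0 ∨ wk k + dlt k ε < x) → (∫ y, T.indicator (fke k ε) (x, y)) = 0 := by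
    intro x hx
    have : (fun y => T.indicator (fke k ε) (x, y)) = fun _ => (0:ℝ) := by
      funext y
      beta_reduce
      rw [Set.indicator_of_notMem (fun hm => by
        rw [memT3] at hm
        rw [hell] at hm
        rcases hx with hc | hc <;> linarith [hm.1.1, hm.1.2, hm.2.1.1])]
    rw [this, integral_zero]
  have outer := inner2 0 (wk k) (wk k + dlt k ε) (by linarith) (by linarith)
    (fun x => cc3 k ε * (wk k - x) + cc2 k ε * dlt k ε)
    (fun x => cc2 k ε * (wk k + dlt k ε - x))
    (by fun_prop) (by fun_prop)
    (fun x => ∫ y, T.indicator (fke k ε) (x, y)) e1 e2 e0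
  rw [outer]
  have hp1 : ∀ x : ℝ, cc3 k ε * (wk k - x) + cc2 k ε * dlt k ε =
      (cc3 k ε * wk k + cc2 k ε * dlt k ε) + (-(cc3 k ε)) * x + 0 * x^2 := fun x => by ring
  have hp2 : ∀ x : ℝ, cc2 k ε * (wk k + dlt k ε - x) =
      (cc2 k ε * (wk k + dlt k ε)) + (-(cc2 k ε)) * x + 0 * x^2 := fun x => by ring
  simp_rw [hp1, hp2]
  rw [poly_int, poly_int]
  ring

lemma INT4 (h : OK k ε) :
    ∫ p in ({p : ℝ × ℝ | p.1 < ell k p.2 ∧ p.2 - p.1 < 1/2} ∩ square),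
      (ell k p.2 - p.1) * fke k ε p = cc3 k ε * (wk k)^3/12 := by
  have he12 := h.he12
  have he0 := h.he0
  have hw0 := h.hw0
  have hw4 := h.hw4
  have hTm : MeasurableSet ({p : ℝ × ℝ | p.1 < ell k p.2 ∧ p.2 - p.1 < 1/2} ∩ square) := by
    refine MeasurableSet.inter ?_ measurableSet_square
    exact (measurableSet_lt measurable_fst (measurable_ellsnd k)).inter
      (measurableSet_lt (measurable_snd.sub measurable_fst) measurable_const)
  have hgm : Measurable fun p : ℝ × ℝ => (ell k p.2 - p.1) * fke k ε p :=
    ((measurable_ellsnd k).sub measurable_fst).mul (measurable_fke k ε)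
  have hgb : ∀ p ∈ square, |(ell k p.2 - p.1) * fke k ε p| ≤
      2 * (cc1 ε + cc2 k ε + cc3 k ε) := by
    intro p hp
    rw [abs_mul]
    have h1 : |ell k p.2 - p.1| ≤ 2 := by
      have hp' := hp
      rw [show p = (p.1, p.2) from rfl, mem_square_iff] at hp'
      have hel : ell k p.2 = p.2/2 - 1/4 + wk k/2 := rfl
      rw [abs_le]
      constructor <;> rw [hel] <;>
        [linarith [hp'.1.1, hp'.1.2, hp'.2.1, hp'.2.2];
         linarith [hp'.1.1, hp'.1.2, hp'.2.1, hp'.2.2]]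
    have h2 := fke_bound h p hp
    calc |ell k p.2 - p.1| * |fke k ε p| ≤ 2 * |fke k ε p| :=
          mul_le_mul_of_nonneg_right h1 (abs_nonneg _)
      _ ≤ 2 * (cc1 ε + cc2 k ε + cc3 k ε) := by linarith [h2, abs_nonneg (fke k ε p)]
  rw [iterInt _ hTm inter_subset_right _ hgm _ hgb]
  set T := {p : ℝ × ℝ | p.1 < ell k p.2 ∧ p.2 - p.1 < 1/2} ∩ square with hT
  have hell : ∀ y : ℝ, ell k y = y/2 - 1/4 + wk k/2 := fun y => rfl
  have e1 : ∀ x ∈ Ioo (0:ℝ) (wk k),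
      (∫ y, T.indicator (fun p : ℝ × ℝ => (ell k p.2 - p.1) * fke k ε p) (x, y)) =
      cc3 k ε * (wk k - x)^2/4 := by
    intro x hx
    obtain ⟨hx0, hx1⟩ := hx
    have key := inner1 (2*x + 1/2 - wk k) (x + 1/2) (by linarith)
      (fun y => cc3 k ε * (y/2 - 1/4 + wk k/2 - x)) (by fun_prop)
      (fun y => T.indicator (fun p : ℝ × ℝ => (ell k p.2 - p.1) * fke k ε p) (x, y))
      (fun y hy => by
        beta_reduce
        rw [Set.indicator_of_mem ((memT4 k x y).2
          ⟨⟨by rw [hell]; linarith [hy.1], by linarith [hy.2]⟩,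
           ⟨by linarith, by linarith⟩, by linarith [hy.1], by linarith [hy.2]⟩)]
        show (ell k y - x) * fke k ε (x, y) = _
        rw [fke_eq3 he0.le (show (x,y).2 - (x,y).1 < 1/2 by
          show y - x < 1/2; linarith [hy.2]), hell]
        ring)
      (fun y hy => by
        beta_reduce
        rw [Set.indicator_of_notMem (fun hm => by
          rw [memT4] at hm
          rw [hell] at hm
          rcases hy with hc | hc <;> linarith [hm.1.1, hm.1.2])])
    rw [key]
    have hp : ∀ y : ℝ, cc3 k ε * (y/2 - 1/4 + wk k/2 - x) =
        (cc3 k ε * (wk k/2 - 1/4 - x)) + (cc3 k ε/2) * y + 0 * y^2 := fun y => by ring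
    simp_rw [hp]
    rw [poly_int]
    ring
  have e0 : ∀ x : ℝ, (x < 0 ∨ wk k < x) →
      (∫ y, T.indicator (fun p : ℝ × ℝ => (ell k p.2 - p.1) * fke k ε p) (x, y)) = 0 := by
    intro x hx
    have : (fun y => T.indicator (fun p : ℝ × ℝ => (ell k p.2 - p.1) * fke k ε p) (x, y)) =
        fun _ => (0:ℝ) := by
      funext y
      beta_reduce
      rw [Set.indicator_of_notMem (fun hm => by
        rw [memT4] at hm
        rw [hell] at hm
        rcases hx with hc | hc <;> linarith [hm.1.1, hm.1.2, hm.2.1.1])]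
    rw [this, integral_zero]
  have outer := inner1 0 (wk k) (by linarith)
    (fun x => cc3 k ε * (wk k - x)^2/4) (by fun_prop)
    (fun x => ∫ y, T.indicator (fun p : ℝ × ℝ => (ell k p.2 - p.1) * fke k ε p) (x, y)) e1 e0
  rw [outer]
  have hp2 : ∀ x : ℝ, cc3 k ε * (wk k - x)^2/4 =
      (cc3 k ε * (wk k)^2/4) + (-(cc3 k ε * wk k/2)) * x + (cc3 k ε/4) * x^2 := fun x => by ring
  simp_rw [hp2]
  rw [poly_int]
  ring

noncomputable def psi (k ε : ℝ) (p : ℝ × ℝ) : ℝ :=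
  max p.1 (max (p.2 - 1/2 - dlt k ε) (ell k p.2))

noncomputable def phi (p : ℝ × ℝ) : ℝ := max p.1 (p.2 - 1/2)

noncomputable def mech (k ε : ℝ) : Mech where
  c := fun p => if p.1 < p.2 - 1/2 - dlt k ε ∧ ell k p.2 ≤ p.2 - 1/2 - dlt k ε then 1/2 + dlt k ε
    else if p.1 < ell k p.2 then 1/4 - wk k/2 else 0
  x := fun p => if p.1 < p.2 - 1/2 - dlt k ε ∧ ell k p.2 ≤ p.2 - 1/2 - dlt k ε then 1
    else if p.1 < ell k p.2 then 1/2 else 1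
  y := fun p => if p.1 < p.2 - 1/2 - dlt k ε ∧ ell k p.2 ≤ p.2 - 1/2 - dlt k ε then Good.B
    else if p.1 < ell k p.2 then Good.B else Good.A

lemma mech_U (p : ℝ × ℝ) : (mech k ε).U p = psi k ε p := by
  unfold Mech.U Mech.util mech psi
  dsimp only
  split_ifs with h1 h2 <;> dsimp only
  · rw [max_eq_left h1.2, max_eq_right (le_of_lt h1.1)]
    ring
  · have hM : p.2 - 1/2 - dlt k ε ≤ ell k p.2 := by
      by_cases hM1 : p.1 < p.2 - 1/2 - dlt k ε
      · push_neg at h1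
        exact le_of_lt (h1 hM1)
      · push_neg at hM1
        linarith
    rw [max_eq_right hM, max_eq_right (le_of_lt h2)]
    unfold ell
    ring
  · push_neg at h2
    have hM : p.2 - 1/2 - dlt k ε ≤ p.1 := by
      by_cases hM1 : ell k p.2 ≤ p.2 - 1/2 - dlt k ε
      · by_contra hc
        push_neg at hc
        exact h1 ⟨hc, hM1⟩
      · push_neg at hM1
        linarith
    rw [max_eq_left (max_le hM h2), one_mul, sub_zero]

lemma mech_IC : (mech k ε).IC := by
  intro t _ r _
  rw [mech_U]
  unfold Mech.util mech psi
  dsimp only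
  split_ifs with h1 h2 <;> dsimp only
  · have heq : (1:ℝ) * t.2 - (1/2 + dlt k ε) = t.2 - 1/2 - dlt k ε := by ring
    rw [heq]
    exact le_max_of_le_right (le_max_left _ _)
  · have heq : (1:ℝ)/2 * t.2 - (1/4 - wk k/2) = ell k t.2 := by unfold ell; ring
    rw [heq]
    exact le_max_of_le_right (le_max_right _ _)
  · rw [one_mul, sub_zero]
    exact le_max_left _ _

lemma mech_IR : (mech k ε).IR := by
  intro t ht
  rw [mech_U]
  exact le_trans ht.1.1 (le_max_left _ _)

lemma mech_Valid (h : OK k ε) : (mech k ε).Valid := by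
  constructor
  · intro r
    unfold mech
    dsimp only
    split_ifs
    · linarith [h.hdel0]
    · linarith [h.hw4]
    · exact le_refl 0
  · intro r
    unfold mech
    dsimp only
    split_ifs
    · exact ⟨by norm_num, by norm_num⟩
    · exact ⟨by norm_num, by norm_num⟩
    · exact ⟨by norm_num, by norm_num⟩

lemma mech_yB :
    {p : ℝ × ℝ | (mech k ε).y p = Good.B} =
      {p : ℝ × ℝ | p.1 < p.2 - 1/2 - dlt k ε} ∪ {p : ℝ × ℝ | p.1 < ell k p.2} := by
  ext p
  simp only [mech, Set.mem_setOf_eq, Set.mem_union]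
  split_ifs with h1 h2
  · constructor
    · intro _; exact Or.inl h1.1
    · intro _; rfl
  · constructor
    · intro _; exact Or.inr h2
    · intro _; rfl
  · constructor
    · intro hAB; exact hAB.elim
    · intro hor
      exfalso
      rcases hor with hc | hc
      · push_neg at h2
        exact h1 ⟨hc, by linarith⟩
      · exact h2 hc

lemma mech_yA :
    {p : ℝ × ℝ | (mech k ε).y p = Good.A} =
      ({p : ℝ × ℝ | p.1 < p.2 - 1/2 - dlt k ε} ∪ {p : ℝ × ℝ | p.1 < ell k p.2})ᶜ := by
  ext p
  simp only [mech, Set.mem_setOf_eq, Set.mem_compl_iff, Set.mem_union]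
  split_ifs with h1 h2
  · constructor
    · intro hBA; exact hBA.elim
    · intro hn; exact absurd (Or.inl h1.1) hn
  · constructor
    · intro hBA; exact hBA.elim
    · intro hn; exact absurd (Or.inr h2) hn
  · constructor
    · intro _
      rintro (hc | hc)
      · push_neg at h2
        exact h1 ⟨hc, by linarith⟩
      · exact h2 hc
    · intro _; rfl

lemma fke_nonneg (h : OK k ε) (p : ℝ × ℝ) : 0 ≤ fke k ε p := by
  have h1 := h.hc1
  have h2 := h.hc2
  have h3 := h.hc3
  unfold fke
  unfold cc1 at h1
  unfold cc2 at h2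
  unfold cc3 at h3
  split_ifs <;> linarith

lemma intOn_fke (h : OK k ε) : IntegrableOn (fke k ε) square :=
  intOnSquare _ (measurable_fke k ε) _ (fke_bound h)

lemma measurable_M1 : Measurable fun p : ℝ × ℝ => p.2 - 1/2 - dlt k ε :=
  (measurable_snd.sub measurable_const).sub measurable_const

lemma capB (h : OK k ε) : Fmeas (fke k ε) {p | (mech k ε).y p = Good.B} = k + ε := by
  rw [Fmeas, mech_yB]
  have hAm : MeasurableSet {p : ℝ × ℝ | p.1 < p.2 - 1/2 - dlt k ε} :=
    measurableSet_lt measurable_fst measurable_M1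
  have hBm : MeasurableSet {p : ℝ × ℝ | p.1 < ell k p.2} :=
    measurableSet_lt measurable_fst (measurable_ellsnd k)
  have hsplit : ({p : ℝ × ℝ | p.1 < p.2 - 1/2 - dlt k ε} ∪ {p : ℝ × ℝ | p.1 < ell k p.2}) ∩ square =
      ({p : ℝ × ℝ | p.1 < p.2 - 1/2 - dlt k ε} ∩ square) ∪
      (({p : ℝ × ℝ | p.1 < ell k p.2} \ {p : ℝ × ℝ | p.1 < p.2 - 1/2 - dlt k ε}) ∩ square) := by
    rw [← Set.union_inter_distrib_right, Set.union_diff_self]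
  rw [hsplit, setIntegral_union
    (Set.disjoint_left.mpr (fun p hp1 hp2 => hp2.1.2 hp1.1))
    ((hBm.diff hAm).inter measurableSet_square)
    ((intOn_fke h).mono_set inter_subset_right)
    ((intOn_fke h).mono_set inter_subset_right)]
  have hA : {p : ℝ × ℝ | p.1 < p.2 - 1/2 - dlt k ε} ∩ square =
      {p : ℝ × ℝ | 1/2 + dlt k ε < p.2 - p.1} ∩ square := by
    apply Set.ext
    intro p
    simp only [Set.mem_inter_iff, Set.mem_setOf_eq]
    constructor <;> rintro ⟨h1, h2⟩ <;> exact ⟨by linarith, h2⟩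
  have hBA : ({p : ℝ × ℝ | p.1 < ell k p.2} \ {p : ℝ × ℝ | p.1 < p.2 - 1/2 - dlt k ε}) ∩ square =
      {p : ℝ × ℝ | p.1 < ell k p.2 ∧ p.2 - p.1 ≤ 1/2 + dlt k ε} ∩ square := by
    apply Set.ext
    intro p
    simp only [Set.mem_inter_iff, Set.mem_diff, Set.mem_setOf_eq, not_lt]
    constructor
    · rintro ⟨⟨h1, h2⟩, h3⟩
      exact ⟨⟨h1, by linarith⟩, h3⟩
    · rintro ⟨⟨h1, h2⟩, h3⟩
      exact ⟨⟨h1, by linarith⟩, h3⟩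
  rw [hA, hBA, INT2 h (le_of_lt h.hdel0) (le_of_lt h.hdele), INT3 h]
  have hid := h.hdel_id
  have hc3w := h.hc3w
  have hkc2 := h.hkc2
  linear_combination hc3w + hkc2 - cc2 k ε * hid

lemma capA (h : OK k ε) : Fmeas (fke k ε) {p | (mech k ε).y p = Good.A} = 1 - k - ε := by
  rw [Fmeas, mech_yA]
  have hAm : MeasurableSet {p : ℝ × ℝ | p.1 < p.2 - 1/2 - dlt k ε} :=
    measurableSet_lt measurable_fst measurable_M1
  have hBm : MeasurableSet {p : ℝ × ℝ | p.1 < ell k p.2} :=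
    measurableSet_lt measurable_fst (measurable_ellsnd k)
  have hDm := hAm.union hBm
  set D := {p : ℝ × ℝ | p.1 < p.2 - 1/2 - dlt k ε} ∪ {p : ℝ × ℝ | p.1 < ell k p.2} with hD
  have hu : (D ∩ square) ∪ (Dᶜ ∩ square) = square := by
    rw [← Set.union_inter_distrib_right, Set.union_compl_self, Set.univ_inter]
  have hadd : (∫ p in D ∩ square, fke k ε p) + (∫ p in Dᶜ ∩ square, fke k ε p) =
      ∫ p in square, fke k ε p := by
    rw [← setIntegral_union
      (Set.disjoint_left.mpr (fun p hp1 hp2 => hp2.1 hp1.1))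
      (hDm.compl.inter measurableSet_square)
      ((intOn_fke h).mono_set inter_subset_right)
      ((intOn_fke h).mono_set inter_subset_right), hu]
  have h1 : (∫ p in D ∩ square, fke k ε p) = k + ε := by
    have := capB h
    rw [Fmeas, mech_yB] at this
    exact this
  rw [INT1 h] at hadd
  linarith

lemma mech_feasible (h : OK k ε) : (mech k ε).Feasible (fke k ε) (1-k-ε) (k+ε) :=
  ⟨mech_Valid h, mech_IC, mech_IR, le_of_eq (capA h), le_of_eq (capB h)⟩

lemma welfare_psi : (mech k ε).welfare (fke k ε) = ∫ p in square, psi k ε p * fke k ε p := by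
  unfold Mech.welfare
  simp_rw [mech_U]

lemma measurable_psi : Measurable (psi k ε) :=
  measurable_fst.max (measurable_M1.max (measurable_ellsnd k))

lemma measurable_phi : Measurable phi :=
  measurable_fst.max (measurable_snd.sub measurable_const)

lemma psi_le_one (h : OK k ε) (p : ℝ × ℝ) (hp : p ∈ square) : psi k ε p ≤ 1 := by
  rw [show p = (p.1, p.2) from rfl, mem_square_iff] at hp
  have hw4 := h.hw4
  have hd0 := h.hdel0
  unfold psi ell
  refine max_le hp.1.2 (max_le (by linarith [hp.2.2]) (by linarith [hp.2.2]))

lemma psi_nonneg (p : ℝ × ℝ) (hp : p ∈ square) : 0 ≤ psi k ε p :=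
  le_trans hp.1.1 (le_max_left _ _)

lemma phi_le_one (p : ℝ × ℝ) (hp : p ∈ square) : phi p ≤ 1 := by
  rw [show p = (p.1, p.2) from rfl, mem_square_iff] at hp
  exact max_le hp.1.2 (by linarith [hp.2.2])

lemma phi_nonneg (p : ℝ × ℝ) (hp : p ∈ square) : 0 ≤ phi p :=
  le_trans hp.1.1 (le_max_left _ _)

lemma ccsum_nonneg (h : OK k ε) : 0 ≤ cc1 ε + cc2 k ε + cc3 k ε := by
  linarith [h.hc1, h.hc2, h.hc3]

lemma intOn_psif (h : OK k ε) : IntegrableOn (fun p => psi k ε p * fke k ε p) square := by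
  refine intOnSquare _ (measurable_psi.mul (measurable_fke k ε)) (cc1 ε + cc2 k ε + cc3 k ε) ?_
  intro p hp
  rw [abs_mul]
  calc |psi k ε p| * |fke k ε p| ≤ 1 * (cc1 ε + cc2 k ε + cc3 k ε) := by
        apply mul_le_mul _ (fke_bound h p hp) (abs_nonneg _) zero_le_one
        rw [abs_le]
        exact ⟨by linarith [psi_nonneg (k := k) (ε := ε) p hp], psi_le_one h p hp⟩
    _ = cc1 ε + cc2 k ε + cc3 k ε := one_mul _

lemma intOn_phif (h : OK k ε) : IntegrableOn (fun p => phi p * fke k ε p) square := by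
  refine intOnSquare _ (measurable_phi.mul (measurable_fke k ε)) (cc1 ε + cc2 k ε + cc3 k ε) ?_
  intro p hp
  rw [abs_mul]
  calc |phi p| * |fke k ε p| ≤ 1 * (cc1 ε + cc2 k ε + cc3 k ε) := by
        apply mul_le_mul _ (fke_bound h p hp) (abs_nonneg _) zero_le_one
        rw [abs_le]
        exact ⟨by linarith [phi_nonneg p hp], phi_le_one p hp⟩
    _ = cc1 ε + cc2 k ε + cc3 k ε := one_mul _

lemma welfare_gt (h : OK k ε) :
    (∫ p in square, phi p * fke k ε p) < (mech k ε).welfare (fke k ε) := by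
  rw [welfare_psi]
  have hGSm : MeasurableSet {p : ℝ × ℝ | p.1 < ell k p.2 ∧ p.2 - p.1 < 1/2} :=
    (measurableSet_lt measurable_fst (measurable_ellsnd k)).inter
      (measurableSet_lt (measurable_snd.sub measurable_fst) measurable_const)
  have hS0m : MeasurableSet {p : ℝ × ℝ | 1/2 < p.2 - p.1} :=
    measurableSet_lt measurable_const (measurable_snd.sub measurable_fst)
  set GS := {p : ℝ × ℝ | p.1 < ell k p.2 ∧ p.2 - p.1 < 1/2} with hGS
  set S0 := {p : ℝ × ℝ | 1/2 < p.2 - p.1} with hS0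
  set low : ℝ × ℝ → ℝ :=
    fun p => GS.indicator (fun q => ell k q.2 - q.1) p - S0.indicator (fun _ => dlt k ε) p
    with hlow
  -- integrability of the two indicator pieces (times fke)
  have hell_bound : ∀ p ∈ square, |ell k p.2 - p.1| ≤ 2 := by
    intro p hp
    rw [show p = (p.1, p.2) from rfl, mem_square_iff] at hp
    have hel : ell k p.2 = p.2/2 - 1/4 + wk k/2 := rfl
    rw [abs_le, hel]
    have hw4 := h.hw4
    have hw0 := h.hw0
    constructor <;> [linarith [hp.1.1, hp.1.2, hp.2.1, hp.2.2];
      linarith [hp.1.1, hp.1.2, hp.2.1, hp.2.2]]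
  have hi1 : IntegrableOn
      (fun p => GS.indicator (fun q => (ell k q.2 - q.1) * fke k ε q) p) square := by
    refine intOnSquare _ ((((measurable_ellsnd k).sub measurable_fst).mul
      (measurable_fke k ε)).indicator hGSm) (2 * (cc1 ε + cc2 k ε + cc3 k ε)) ?_
    intro p hp
    by_cases hm : p ∈ GS
    · rw [Set.indicator_of_mem hm, abs_mul]
      exact mul_le_mul (hell_bound p hp) (fke_bound h p hp) (abs_nonneg _) (by norm_num)
    · rw [Set.indicator_of_notMem hm]
      simp only [abs_zero]
      linarith [ccsum_nonneg h]
  have hi2 : IntegrableOn (fun p => dlt k ε * S0.indicator (fun q => fke k ε q) p) square := by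
    refine intOnSquare _ (measurable_const.mul ((measurable_fke k ε).indicator hS0m))
      (dlt k ε * (cc1 ε + cc2 k ε + cc3 k ε)) ?_
    intro p hp
    rw [abs_mul, abs_of_nonneg (le_of_lt h.hdel0)]
    apply mul_le_mul_of_nonneg_left _ (le_of_lt h.hdel0)
    by_cases hm : p ∈ S0
    · rw [Set.indicator_of_mem hm]
      exact fke_bound h p hp
    · rw [Set.indicator_of_notMem hm]
      simp only [abs_zero]
      exact ccsum_nonneg h
  have hexp : ∀ p : ℝ × ℝ, low p * fke k ε p =
      GS.indicator (fun q => (ell k q.2 - q.1) * fke k ε q) p -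
      dlt k ε * S0.indicator (fun q => fke k ε q) p := by
    intro p
    simp only [hlow, Set.indicator_apply]
    split_ifs <;> ring
  have hlowval : (∫ p in square, low p * fke k ε p) =
      cc3 k ε * (wk k)^3/12 - dlt k ε * (k + ε) := by
    simp_rw [hexp]
    rw [integral_sub hi1 hi2, MeasureTheory.integral_const_mul,
      setIntegral_indicator hGSm, setIntegral_indicator hS0m,
      Set.inter_comm square GS, Set.inter_comm square S0]
    have hS0val : (∫ p in S0 ∩ square, fke k ε p) = k + ε := by
      have hseteq : S0 ∩ square = {p : ℝ × ℝ | 1/2 + 0 < p.2 - p.1} ∩ square := by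
        rw [hS0]
        norm_num
      rw [hseteq, INT2 h le_rfl (le_of_lt h.he0)]
      linear_combination h.hkc2
    rw [hS0val, hGS, INT4 h]
  have hlowpos : 0 < ∫ p in square, low p * fke k ε p := by
    rw [hlowval]
    linarith [h.hmargin]
  have hilow : IntegrableOn (fun p => low p * fke k ε p) square := by
    have := hi1.sub hi2
    simp only [hexp]
    exact this
  have hmono : (∫ p in square, phi p * fke k ε p) + (∫ p in square, low p * fke k ε p) ≤
      ∫ p in square, psi k ε p * fke k ε p := by
    rw [← integral_add (intOn_phif h) hilow]
    refine setIntegral_mono_on ((intOn_phif h).add hilow) (intOn_psif h)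
      measurableSet_square ?_
    intro p hp
    have hss : phi p + low p ≤ psi k ε p := by
      have hd0 := h.hdel0
      by_cases h1 : p ∈ GS
      · have h1' : p.1 < ell k p.2 ∧ p.2 - p.1 < 1/2 := h1
        have h2 : p ∉ S0 := fun hc => by
          have hc' : 1/2 < p.2 - p.1 := hc
          linarith [h1'.2]
        simp only [hlow]
        rw [Set.indicator_of_mem h1, Set.indicator_of_notMem h2]
        have hphi : phi p = p.1 := max_eq_left (by linarith [h1'.2])
        have hpsi : ell k p.2 ≤ psi k ε p := le_max_of_le_right (le_max_right _ _)
        rw [hphi]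
        linarith
      · by_cases h2 : p ∈ S0
        · have h2' : 1/2 < p.2 - p.1 := h2
          simp only [hlow]
          rw [Set.indicator_of_notMem h1, Set.indicator_of_mem h2]
          have hphi : phi p = p.2 - 1/2 := max_eq_right (by linarith)
          have hpsi : p.2 - 1/2 - dlt k ε ≤ psi k ε p :=
            le_max_of_le_right (le_max_left _ _)
          rw [hphi]
          linarith
        · have h2' : ¬ (1/2 < p.2 - p.1) := h2
          push_neg at h2'
          simp only [hlow]
          rw [Set.indicator_of_notMem h1, Set.indicator_of_notMem h2]
          have hphi : phi p = p.1 := max_eq_left (by linarith)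
          rw [hphi]
          have : p.1 ≤ psi k ε p := le_max_left _ _
          linarith
    have hf0 := fke_nonneg h p
    nlinarith [mul_le_mul_of_nonneg_right hss hf0]
  linarith

lemma Wstar_nonneg (h : OK k ε) : 0 ≤ ∫ p in square, phi p * fke k ε p :=
  setIntegral_nonneg measurableSet_square
    (fun p hp => mul_nonneg (phi_nonneg p hp) (fke_nonneg h p))

lemma ordeal_le (h : OK k ε) (M' : Mech) (hF : M'.Feasible (fke k ε) (1-k-ε) (k+ε))
    (hx : ∀ p, M'.x p = 1) :
    M'.welfare (fke k ε) ≤ ∫ p in square, phi p * fke k ε p := by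
  obtain ⟨⟨hc, hxv⟩, hIC, hIR, hA, hB⟩ := hF
  by_cases hcase : ∃ r, r ∈ square ∧ M'.y r = Good.B ∧ M'.c r < 1/2
  · exfalso
    obtain ⟨r0, hr0sq, hr0B, hr0c⟩ := hcase
    set c0 := M'.c r0 with hc0def
    have hc00 : 0 ≤ c0 := hc r0
    set ρ : ℝ := (1/2 - c0)/2 with hrho
    have hρ0 : 0 < ρ := by rw [hrho]; linarith
    have hρ4 : ρ ≤ 1/4 := by rw [hrho]; linarith
    have hPB : ∀ p, p ∈ ({p : ℝ × ℝ | c0 < p.2 - p.1} ∩ square) → M'.y p = Good.B := by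
      intro p hp
      obtain ⟨hp1, hp2⟩ := hp
      have hp1' : c0 < p.2 - p.1 := hp1
      have hge := hIC p hp2 r0 hr0sq
      have hutil : M'.util p r0 = p.2 - c0 := by
        simp only [Mech.util, hr0B, hx r0, one_mul, hc0def]
      rw [hutil] at hge
      have hp10 : 0 ≤ p.1 := hp2.1.1
      cases hyt : M'.y p with
      | none =>
        exfalso
        have hU : M'.U p = 0 := by simp only [Mech.U, Mech.util, hyt]
        rw [hU] at hge
        linarith
      | A =>
        exfalso
        have hU : M'.U p = M'.x p * p.1 - M'.c p := by simp only [Mech.U, Mech.util, hyt]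
        rw [hU, hx p, one_mul] at hge
        have := hc p
        linarith
      | B => rfl
    set Q : Set (ℝ × ℝ) := Icc (0:ℝ) (ρ/2) ×ˢ Icc (c0 + ρ) (c0 + 3*ρ/2) with hQ
    have hQm : MeasurableSet Q := measurableSet_Icc.prod measurableSet_Icc
    have hQsub : Q ⊆ {p : ℝ × ℝ | c0 < p.2 - p.1} ∩ square := by
      intro p hp
      obtain ⟨hpa, hpb⟩ := hp
      constructor
      · show c0 < p.2 - p.1
        have := hpa.2
        have := hpb.1
        linarith
      · exact ⟨⟨hpa.1, by linarith [hpa.2]⟩, ⟨by linarith [hpb.1], by linarith [hpb.2]⟩⟩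
    have hSsub : ({p : ℝ × ℝ | 1/2 + 0 < p.2 - p.1} ∩ square) ⊆
        {p : ℝ × ℝ | c0 < p.2 - p.1} ∩ square := by
      intro p hp
      refine ⟨?_, hp.2⟩
      have h1 : 1/2 + 0 < p.2 - p.1 := hp.1
      show c0 < p.2 - p.1
      linarith
    have hdisj : Disjoint ({p : ℝ × ℝ | 1/2 + 0 < p.2 - p.1} ∩ square) Q := by
      rw [Set.disjoint_left]
      intro p hp hq
      have h1 : 1/2 + 0 < p.2 - p.1 := hp.1
      have h2 : p.2 ≤ c0 + 3*ρ/2 := hq.2.2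
      have h3 : 0 ≤ p.1 := hq.1.1
      rw [hrho] at h2
      linarith
    have hQval : (∫ p in Q, fke k ε p) = cc3 k ε * (ρ/2 * (ρ/2)) := by
      have hcongr : Set.EqOn (fke k ε) (fun _ => cc3 k ε) Q := by
        intro p hp
        apply fke_eq3 h.he0.le
        have h2 : p.2 ≤ c0 + 3*ρ/2 := hp.2.2
        have h3 : 0 ≤ p.1 := hp.1.1
        rw [hrho] at h2
        linarith
      rw [setIntegral_congr_fun hQm hcongr, setIntegral_const, Measure.real, hQ, Measure.volume_eq_prod,
        Measure.prod_prod, Real.volume_Icc, Real.volume_Icc,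
        ← ENNReal.ofReal_mul (by linarith), ENNReal.toReal_ofReal (by nlinarith),
        smul_eq_mul]
      ring
    have hSval : (∫ p in ({p : ℝ × ℝ | 1/2 + 0 < p.2 - p.1} ∩ square), fke k ε p) = k + ε := by
      rw [INT2 h le_rfl h.he0.le]
      linear_combination h.hkc2
    have hintP : IntegrableOn (fke k ε) ({p : ℝ × ℝ | c0 < p.2 - p.1} ∩ square) :=
      (intOn_fke h).mono_set inter_subset_right
    have hae : 0 ≤ᵐ[volume.restrict ({p : ℝ × ℝ | c0 < p.2 - p.1} ∩ square)] fke k ε :=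
      ae_of_all _ (fun p => fke_nonneg h p)
    have hunion_le :
        (∫ p in (({p : ℝ × ℝ | 1/2 + 0 < p.2 - p.1} ∩ square) ∪ Q), fke k ε p) ≤
        ∫ p in ({p : ℝ × ℝ | c0 < p.2 - p.1} ∩ square), fke k ε p :=
      setIntegral_mono_set hintP hae ((Set.union_subset hSsub hQsub).eventuallyLE)
    have hunion_eq :
        (∫ p in (({p : ℝ × ℝ | 1/2 + 0 < p.2 - p.1} ∩ square) ∪ Q), fke k ε p) =
        (k + ε) + cc3 k ε * (ρ/2 * (ρ/2)) := by
      rw [setIntegral_union hdisj hQm ((intOn_fke h).mono_set inter_subset_right)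
        ((intOn_fke h).mono_set (hQsub.trans inter_subset_right)), hSval, hQval]
    rw [hunion_eq] at hunion_le
    have hsub2 : ({p : ℝ × ℝ | c0 < p.2 - p.1} ∩ square) ⊆
        ({p : ℝ × ℝ | M'.y p = Good.B} ∩ square) := fun p hp => ⟨hPB p hp, hp.2⟩
    have hle2 : (∫ p in ({p : ℝ × ℝ | c0 < p.2 - p.1} ∩ square), fke k ε p) ≤
        Fmeas (fke k ε) {p | M'.y p = Good.B} := by
      rw [Fmeas]
      exact setIntegral_mono_set ((intOn_fke h).mono_set inter_subset_right)
        (ae_of_all _ (fun p => fke_nonneg h p)) hsub2.eventuallyLE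
    have hpos : 0 < cc3 k ε * (ρ/2 * (ρ/2)) :=
      mul_pos h.hc3 (by positivity)
    linarith [hB]
  · push_neg at hcase
    have hUb : ∀ t ∈ square, M'.U t ≤ phi t := by
      intro t ht
      have ht1 : 0 ≤ t.1 := ht.1.1
      unfold Mech.U Mech.util
      cases hyt : M'.y t with
      | none => exact phi_nonneg t ht
      | A =>
        show M'.x t * t.1 - M'.c t ≤ phi t
        rw [hx t, one_mul]
        have h1 := hc t
        have h2 : t.1 ≤ phi t := le_max_left _ _
        linarith
      | B =>
        show M'.x t * t.2 - M'.c t ≤ phi t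
        rw [hx t, one_mul]
        have h1 := hcase t ht hyt
        have h2 : t.2 - 1/2 ≤ phi t := le_max_right _ _
        linarith
    by_cases hint : IntegrableOn (fun p => M'.U p * fke k ε p) square
    · unfold Mech.welfare
      refine setIntegral_mono_on hint (intOn_phif h) measurableSet_square ?_
      intro p hp
      exact mul_le_mul_of_nonneg_right (hUb p hp) (fke_nonneg h p)
    · unfold Mech.welfare
      rw [integral_undef hint]
      exact Wstar_nonneg h

end DamagesEx

theorem damages_can_be_strictly_optimal :
    ∀ k ∈ Ioo (0:ℝ) 1,
      ∃ εbar ∈ Ioo (0:ℝ) (min (1/2) (1 - k)),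
        ∀ ε ∈ Ioo (0:ℝ) εbar,
          ∃ M : Mech,
            M.Feasible (fke k ε) (1 - k - ε) (k + ε) ∧
            sSup {w : ℝ | ∃ M' : Mech,
                M'.Feasible (fke k ε) (1 - k - ε) (k + ε) ∧
                (∀ p, M'.x p = 1) ∧ w = M'.welfare (fke k ε)}
              < M.welfare (fke k ε) := by
  intro k hk
  obtain ⟨hk0, hk1⟩ := hk
  have hsq0 : 0 < Real.sqrt k := Real.sqrt_pos.2 hk0
  have hsq1 : Real.sqrt k < 1 := by
    nlinarith [Real.sq_sqrt hk0.le, Real.sqrt_nonneg k]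
  have h1k : (0:ℝ) < 1 - k := by linarith
  refine ⟨min k ((1 - k) * Real.sqrt k / 1000), ⟨lt_min hk0 (by positivity), ?_⟩, ?_⟩
  · apply lt_min
    · calc min k ((1 - k) * Real.sqrt k / 1000) ≤ (1 - k) * Real.sqrt k / 1000 :=
          min_le_right _ _
        _ < 1/2 := by nlinarith
    · calc min k ((1 - k) * Real.sqrt k / 1000) ≤ (1 - k) * Real.sqrt k / 1000 :=
          min_le_right _ _
        _ < 1 - k := by nlinarith
  · intro ε hε
    obtain ⟨hε0, hεb⟩ := hε
    have h : DamagesEx.OK k ε :=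
      ⟨hk0, hk1, hε0, lt_of_lt_of_le hεb (min_le_left _ _),
        lt_of_lt_of_le hεb (min_le_right _ _)⟩
    refine ⟨DamagesEx.mech k ε, DamagesEx.mech_feasible h, ?_⟩
    have hsup : sSup {w : ℝ | ∃ M' : Mech,
        M'.Feasible (fke k ε) (1 - k - ε) (k + ε) ∧
        (∀ p, M'.x p = 1) ∧ w = M'.welfare (fke k ε)} ≤
        ∫ p in square, DamagesEx.phi p * fke k ε p := by
      apply Real.sSup_le
      · rintro w ⟨M', hF, hx, rfl⟩
        exact DamagesEx.ordeal_le h M' hF hx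
      · exact DamagesEx.Wstar_nonneg h
    exact lt_of_le_of_lt hsup (DamagesEx.welfare_gt h)
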